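/- (Contraction lemma, case α = 1.) Fix a bird ℓ ∈ {2,…,k} and p ∈ (0,1]. Set A0 = 1 + 2x0, assume w_{0ℓ} := min_{j∈L(ℓ)} ‖v_ℓ[0] − v_j[0]‖ > 0, and set γ_ℓ = Σ_{j∈L(ℓ)} p/‖v_ℓ[0] − v_j[0]‖. Assume that for all t ≥ 0 and all j ∈ L(ℓ), almost surely E( a_{ℓj}[t+1] | F_t ) ≥ p/(A0 + h‖v_ℓ[0] − v_j[0]‖ t). Then for all integers 0 ≤ τ ≤ t, almost surely E[ ∏_{σ=τ+1}^{t+1} (1 − h Σ_{j∈L(ℓ)} a_{ℓj}[σ]) | F_τ ] ≤ ( (A0 + h w_{0ℓ} τ)/(A0 + h w_{0ℓ}(t+1)) )^{γ_ℓ}. -/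

import Mathlib

open MeasureTheory Finset Filter

/-- Bernoulli-type inequality: `1 - γ x ≤ (1+x)^(-γ)` for `γ, x ≥ 0`. -/
lemma aux_bernoulli_rpow (γ x : ℝ) (hγ : 0 ≤ γ) (hx : 0 ≤ x) :
    1 - γ * x ≤ (1 + x) ^ (-γ) := by
  rcases le_or_gt (1 - γ * x) 0 with hc | hc
  · exact hc.trans (Real.rpow_pos_of_pos (by linarith) _).le
  · have h1x : (0:ℝ) < 1 + x := by linarith
    have hlog1 : γ * Real.log (1 + x) ≤ γ * x :=
      mul_le_mul_of_nonneg_left (by simpa using Real.log_le_sub_one_of_pos h1x) hγ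
    have hlog2 : Real.log (1 - γ * x) ≤ -(γ * x) := by
      have := Real.log_le_sub_one_of_pos hc; linarith
    have hkey : Real.log (1 - γ * x) ≤ Real.log (1 + x) * (-γ) := by nlinarith
    calc 1 - γ * x = Real.exp (Real.log (1 - γ * x)) := (Real.exp_log hc).symm
      _ ≤ Real.exp (Real.log (1 + x) * (-γ)) := Real.exp_le_exp.2 hkey
      _ = (1 + x) ^ (-γ) := (Real.rpow_def_of_pos h1x _).symm

/-- Contraction lemma, case `α = 1`: fix a bird `ℓ ∈ {2,…,k}` (zero-based `0 < ℓ`)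
and `p ∈ (0,1]`; set `A0 = 1 + 2 x0`, assume `w0ℓ := min_{j∈L(ℓ)} ‖v_ℓ[0] − v_j[0]‖ > 0`,
and set `γℓ = Σ_{j∈L(ℓ)} p/‖v_ℓ[0] − v_j[0]‖`. Assume for all `t ≥ 0` and `j ∈ L(ℓ)`,
a.s. `E(a_{ℓj}[t+1] | F_t) ≥ p/(A0 + h ‖v_ℓ[0] − v_j[0]‖ t)`. Then for all `0 ≤ τ ≤ t`,
a.s. `E[ ∏_{σ=τ+1}^{t+1} (1 − h Σ_{j∈L(ℓ)} a_{ℓj}[σ]) | F_τ ]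
  ≤ ((A0 + h w0ℓ τ)/(A0 + h w0ℓ (t+1)))^{γℓ}`. -/
theorem contraction_lemma_alpha_eq_one
    (k : ℕ) (hk : 2 ≤ k)
    (Ω : Type*) [m0 : MeasurableSpace Ω]
    (μ : Measure Ω) [IsProbabilityMeasure μ]
    (F : ℕ → MeasurableSpace Ω)
    (hFle : ∀ t, F t ≤ m0) (hFmono : Monotone F)
    (x v : ℕ → Ω → Fin k → EuclideanSpace ℝ (Fin 3))
    (L : Fin k → Finset (Fin k))
    (a : ℕ → Ω → Fin k → Fin k → ℝ)
    (h : ℝ) (hh0 : 0 < h) (hh1 : h ≤ 1 / ((k : ℝ) - 1))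
    (hLlt : ∀ i : Fin k, ∀ j ∈ L i, j < i)
    (hLne : ∀ i : Fin k, 0 < i.val → (L i).Nonempty)
    (ha0 : ∀ t ω, ∀ i : Fin k, ∀ j ∈ L i, 0 ≤ a t ω i j)
    (ha1 : ∀ t ω, ∀ i : Fin k, ∀ j ∈ L i, a t ω i j ≤ 1)
    (hxmeas : ∀ t, Measurable[F t] (x t))
    (hvmeas : ∀ t, Measurable[F t] (v t))
    (hameas : ∀ t, ∀ i : Fin k, ∀ j ∈ L i, Measurable[F t] (fun ω => a t ω i j))
    (hxdyn : ∀ t ω i, x (t + 1) ω i = x t ω i + h • v t ω i)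
    (hvdyn : ∀ t ω i, v (t + 1) ω i =
      v t ω i + h • ∑ j ∈ L i, a (t + 1) ω i j • (v t ω j - v t ω i))
    (X0 V0 : Fin k → EuclideanSpace ℝ (Fin 3))
    (hX0 : ∀ ω, x 0 ω = X0) (hV0 : ∀ ω, v 0 ω = V0)
    (hX0z : X0 ⟨0, by omega⟩ = 0) (hV0z : V0 ⟨0, by omega⟩ = 0)
    (p : ℝ) (hp0 : 0 < p) (hp1 : p ≤ 1)
    (ℓ : Fin k) (hℓ : 0 < ℓ.val)
    (w0ℓ γℓ : ℝ)
    (hw0def : w0ℓ = (L ℓ).inf' (hLne ℓ hℓ) (fun j => ‖V0 ℓ - V0 j‖))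
    (hw0pos : 0 < w0ℓ)
    (hγdef : γℓ = ∑ j ∈ L ℓ, p / ‖V0 ℓ - V0 j‖)
    (hK1 : ∀ t : ℕ, ∀ j ∈ L ℓ,
      ∀ᵐ ω ∂μ, p / (1 + 2 * ‖X0‖ + h * ‖V0 ℓ - V0 j‖ * t) ≤
        (μ[fun ω' => a (t + 1) ω' ℓ j | F t]) ω) :
    ∀ τ t : ℕ, τ ≤ t →
      ∀ᵐ ω ∂μ,
        (μ[fun ω' => ∏ σ ∈ Finset.Icc (τ + 1) (t + 1),
            (1 - h * ∑ j ∈ L ℓ, a σ ω' ℓ j) | F τ]) ω ≤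
          ((1 + 2 * ‖X0‖ + h * w0ℓ * τ) /
            (1 + 2 * ‖X0‖ + h * w0ℓ * (t + 1))) ^ γℓ := by
  -- basic scalar facts
  have hkR : (2:ℝ) ≤ (k:ℝ) := by exact_mod_cast hk
  set A0 : ℝ := 1 + 2 * ‖X0‖ with hA0d
  have hA0 : (1:ℝ) ≤ A0 := by
    have := norm_nonneg X0; rw [hA0d]; linarith
  have hw : ∀ j ∈ L ℓ, w0ℓ ≤ ‖V0 ℓ - V0 j‖ := by
    intro j hj; rw [hw0def]; exact Finset.inf'_le _ hj
  have hwpos : ∀ j ∈ L ℓ, (0:ℝ) < ‖V0 ℓ - V0 j‖ :=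
    fun j hj => lt_of_lt_of_le hw0pos (hw j hj)
  have hγ0 : 0 ≤ γℓ := by
    rw [hγdef]; exact Finset.sum_nonneg fun j hj => div_nonneg hp0.le (norm_nonneg _)
  have hcard : ((L ℓ).card : ℝ) ≤ (k:ℝ) - 1 := by
    have h1 : L ℓ ⊆ Finset.univ.erase ℓ := fun j hj =>
      Finset.mem_erase.2 ⟨Fin.ne_of_lt (hLlt ℓ j hj), Finset.mem_univ j⟩
    have h2 : (L ℓ).card ≤ k - 1 := by
      have := Finset.card_le_card h1
      simpa [Finset.card_erase_of_mem, Finset.card_univ] using this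
    calc ((L ℓ).card : ℝ) ≤ ((k-1 : ℕ) : ℝ) := by exact_mod_cast h2
      _ = (k:ℝ) - 1 := by
        rw [Nat.cast_sub (by omega : 1 ≤ k)]; norm_num
  have hhk : h * ((k:ℝ) - 1) ≤ 1 := by
    have hk1 : (0:ℝ) < (k:ℝ) - 1 := by linarith
    calc h * ((k:ℝ) - 1) ≤ (1 / ((k:ℝ)-1)) * ((k:ℝ)-1) :=
          mul_le_mul_of_nonneg_right hh1 hk1.le
      _ = 1 := by field_simp
  set q : ℕ → ℝ := fun s => A0 + h * w0ℓ * s with hqd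
  have hqpos : ∀ s : ℕ, 0 < q s := by
    intro s
    have hs : (0:ℝ) ≤ h * w0ℓ * s := by positivity
    rw [hqd]; dsimp only; linarith
  have hden : ∀ (j : Fin k), j ∈ L ℓ → ∀ s : ℕ, (0:ℝ) < A0 + h * ‖V0 ℓ - V0 j‖ * s := by
    intro j hj s
    have : (0:ℝ) ≤ h * ‖V0 ℓ - V0 j‖ * s := by positivity
    linarith
  -- sum of the p/(...) terms is at most k-1
  have hsum_le : ∀ s : ℕ, ∑ j ∈ L ℓ, p / (A0 + h * ‖V0 ℓ - V0 j‖ * s) ≤ (k:ℝ) - 1 := by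
    intro s
    calc ∑ j ∈ L ℓ, p / (A0 + h * ‖V0 ℓ - V0 j‖ * s) ≤ ∑ _j ∈ L ℓ, (1:ℝ) := by
          refine Finset.sum_le_sum fun j hj => ?_
          rw [div_le_one (hden j hj s)]
          have : (0:ℝ) ≤ h * ‖V0 ℓ - V0 j‖ * s := by positivity
          linarith
      _ = ((L ℓ).card : ℝ) := by simp
      _ ≤ (k:ℝ) - 1 := hcard
  have hD0 : ∀ s : ℕ, 0 ≤ 1 - h * ∑ j ∈ L ℓ, p / (A0 + h * ‖V0 ℓ - V0 j‖ * s) := by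
    intro s
    have h1 : h * ∑ j ∈ L ℓ, p / (A0 + h * ‖V0 ℓ - V0 j‖ * s) ≤ h * ((k:ℝ) - 1) :=
      mul_le_mul_of_nonneg_left (hsum_le s) hh0.le
    linarith
  -- the scalar contraction estimate
  have hDle : ∀ s : ℕ, 1 - h * ∑ j ∈ L ℓ, p / (A0 + h * ‖V0 ℓ - V0 j‖ * s) ≤
      (q s / q (s+1)) ^ γℓ := by
    intro s
    have hqs := hqpos s
    set X : ℝ := h * w0ℓ / q s with hXd
    have hx0 : 0 < X := by positivity
    have hq1 : q (s+1) = q s * (1 + X) := by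
      rw [hXd]
      field_simp
      rw [hqd]; dsimp only; push_cast; ring
    have hrpow : (q s / q (s+1)) ^ γℓ = (1 + X) ^ (-γℓ) := by
      rw [hq1]
      rw [show q s / (q s * (1 + X)) = (1 + X)⁻¹ by field_simp]
      rw [Real.rpow_neg (by linarith : (0:ℝ) ≤ 1 + X),
        Real.inv_rpow (by linarith : (0:ℝ) ≤ 1 + X)]
    rw [hrpow]
    refine le_trans ?_ (aux_bernoulli_rpow γℓ X hγ0 hx0.le)
    have hsum : γℓ * X ≤ h * ∑ j ∈ L ℓ, p / (A0 + h * ‖V0 ℓ - V0 j‖ * s) := by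
      rw [hγdef, Finset.sum_mul, Finset.mul_sum]
      refine Finset.sum_le_sum fun j hj => ?_
      have hwj := hwpos j hj
      have hdj := hden j hj s
      have hwle := hw j hj
      rw [hXd, div_mul_div_comm, mul_div_assoc', div_le_div_iff₀ (by positivity) hdj]
      rw [hqd]; dsimp only
      have hs0 : (0:ℝ) ≤ (s:ℝ) := Nat.cast_nonneg s
      nlinarith [mul_nonneg (mul_nonneg (mul_nonneg hp0.le hh0.le)
          (show (0:ℝ) ≤ A0 by linarith)) (sub_nonneg.2 hwle),
        mul_nonneg (mul_nonneg (mul_nonneg (mul_nonneg hp0.le hh0.le) hh0.le) hw0pos.le) hs0]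
    linarith
  -- integrability of the coefficients
  have haint : ∀ (σ : ℕ), ∀ j ∈ L ℓ, Integrable (fun ω => a σ ω ℓ j) μ := by
    intro σ j hj
    refine (integrable_const (1:ℝ)).mono'
      (((hameas σ ℓ j hj).mono (hFle σ) le_rfl).aestronglyMeasurable)
      (ae_of_all μ fun ω => ?_)
    rw [Real.norm_eq_abs, abs_of_nonneg (ha0 σ ω ℓ j hj)]
    exact ha1 σ ω ℓ j hj
  -- pointwise bounds on Z
  have hZ0 : ∀ (σ : ℕ) (ω : Ω), 0 ≤ 1 - h * ∑ j ∈ L ℓ, a σ ω ℓ j := by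
    intro σ ω
    have hsum : ∑ j ∈ L ℓ, a σ ω ℓ j ≤ ((L ℓ).card : ℝ) := by
      have := Finset.sum_le_card_nsmul (L ℓ) (fun j => a σ ω ℓ j) 1
        (fun j hj => ha1 σ ω ℓ j hj)
      simpa using this
    have h1 : h * ∑ j ∈ L ℓ, a σ ω ℓ j ≤ h * ((k:ℝ) - 1) :=
      mul_le_mul_of_nonneg_left (hsum.trans hcard) hh0.le
    linarith
  have hZ1 : ∀ (σ : ℕ) (ω : Ω), 1 - h * ∑ j ∈ L ℓ, a σ ω ℓ j ≤ 1 := by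
    intro σ ω
    have : 0 ≤ h * ∑ j ∈ L ℓ, a σ ω ℓ j :=
      mul_nonneg hh0.le (Finset.sum_nonneg fun j hj => ha0 σ ω ℓ j hj)
    linarith
  have hZmeas : ∀ σ : ℕ, Measurable[F σ] (fun ω => 1 - h * ∑ j ∈ L ℓ, a σ ω ℓ j) := by
    intro σ
    exact measurable_const.sub
      ((Finset.measurable_sum (L ℓ) fun j hj => hameas σ ℓ j hj).const_mul h)
  have hZint : ∀ σ : ℕ, Integrable (fun ω => 1 - h * ∑ j ∈ L ℓ, a σ ω ℓ j) μ := by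
    intro σ
    refine (integrable_const (1:ℝ)).mono'
      (((hZmeas σ).mono (hFle σ) le_rfl).aestronglyMeasurable)
      (ae_of_all μ fun ω => ?_)
    rw [Real.norm_eq_abs, abs_of_nonneg (hZ0 σ ω)]
    exact hZ1 σ ω
  -- facts about the products G
  have hGmeas : ∀ τ t : ℕ, Measurable[F (t+1)]
      (fun ω => ∏ σ ∈ Finset.Icc (τ+1) (t+1), (1 - h * ∑ j ∈ L ℓ, a σ ω ℓ j)) := by
    intro τ t
    refine Finset.measurable_prod _ fun σ hσ => ?_
    exact (hZmeas σ).mono (hFmono (Finset.mem_Icc.1 hσ).2) le_rfl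
  have hG0 : ∀ (τ t : ℕ) (ω : Ω),
      0 ≤ ∏ σ ∈ Finset.Icc (τ+1) (t+1), (1 - h * ∑ j ∈ L ℓ, a σ ω ℓ j) :=
    fun τ t ω => Finset.prod_nonneg fun σ _ => hZ0 σ ω
  have hG1 : ∀ (τ t : ℕ) (ω : Ω),
      ∏ σ ∈ Finset.Icc (τ+1) (t+1), (1 - h * ∑ j ∈ L ℓ, a σ ω ℓ j) ≤ 1 :=
    fun τ t ω => Finset.prod_le_one (fun σ _ => hZ0 σ ω) (fun σ _ => hZ1 σ ω)
  have hGint : ∀ τ t : ℕ, Integrable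
      (fun ω => ∏ σ ∈ Finset.Icc (τ+1) (t+1), (1 - h * ∑ j ∈ L ℓ, a σ ω ℓ j)) μ := by
    intro τ t
    refine (integrable_const (1:ℝ)).mono'
      (((hGmeas τ t).mono (hFle (t+1)) le_rfl).aestronglyMeasurable)
      (ae_of_all μ fun ω => ?_)
    rw [Real.norm_eq_abs, abs_of_nonneg (hG0 τ t ω)]
    exact hG1 τ t ω
  -- the one-step conditional expectation bound
  have hEZ : ∀ t : ℕ, ∀ᵐ ω ∂μ,
      (μ[(fun ω' => 1 - h * ∑ j ∈ L ℓ, a (t+1) ω' ℓ j) | F t]) ω ≤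
        1 - h * ∑ j ∈ L ℓ, p / (A0 + h * ‖V0 ℓ - V0 j‖ * t) := by
    intro t
    set S : Ω → ℝ := ∑ j ∈ L ℓ, (fun ω' => a (t+1) ω' ℓ j) with hSd
    have e1 : (fun ω' => 1 - h * ∑ j ∈ L ℓ, a (t+1) ω' ℓ j)
        = (fun _ => (1:ℝ)) - h • S := by
      funext ω
      simp [hSd, Finset.sum_apply, smul_eq_mul]
    have hSint : Integrable S μ := by
      rw [hSd]; exact integrable_finset_sum' _ fun j hj => haint (t+1) j hj
    have c1 : μ[(fun _ => (1:ℝ)) - h • S | F t]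
        =ᵐ[μ] μ[(fun _ => (1:ℝ)) | F t] - μ[h • S | F t] :=
      condExp_sub (integrable_const 1) (hSint.smul h) (F t)
    have c2 : μ[(fun _ => (1:ℝ)) | F t] = fun _ => (1:ℝ) := condExp_const (hFle t) 1
    have c3 : μ[h • S | F t] =ᵐ[μ] h • μ[S | F t] := condExp_smul h S (F t)
    have c4 : μ[S | F t] =ᵐ[μ] ∑ j ∈ L ℓ, μ[(fun ω' => a (t+1) ω' ℓ j) | F t] := by
      rw [hSd]; exact condExp_finset_sum (fun j hj => haint (t+1) j hj) (F t)
    have hae : ∀ᵐ ω ∂μ, ∀ j : Fin k, j ∈ L ℓ →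
        p / (A0 + h * ‖V0 ℓ - V0 j‖ * t) ≤ (μ[(fun ω' => a (t+1) ω' ℓ j) | F t]) ω := by
      rw [ae_all_iff]
      intro j
      by_cases hj : j ∈ L ℓ
      · filter_upwards [hK1 t j hj] with ω hω _
        exact hω
      · filter_upwards with ω hj'
        exact absurd hj' hj
    rw [e1]
    filter_upwards [c1, c3, c4, hae] with ω h1 h3 h4 h5
    have key : (μ[(fun _ => (1:ℝ)) - h • S | F t]) ω
        = 1 - h * ∑ j ∈ L ℓ, (μ[(fun ω' => a (t+1) ω' ℓ j) | F t]) ω := by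
      have e2 : (μ[(fun _ => (1:ℝ)) | F t]) ω = 1 := by rw [c2]
      have e3 : (μ[S | F t]) ω = ∑ j ∈ L ℓ, (μ[(fun ω' => a (t+1) ω' ℓ j) | F t]) ω := by
        rw [h4, Finset.sum_apply]
      rw [h1, Pi.sub_apply, e2, h3, Pi.smul_apply, smul_eq_mul, e3]
    rw [key]
    have hle : ∑ j ∈ L ℓ, p / (A0 + h * ‖V0 ℓ - V0 j‖ * t)
        ≤ ∑ j ∈ L ℓ, (μ[(fun ω' => a (t+1) ω' ℓ j) | F t]) ω :=
      Finset.sum_le_sum fun j hj => h5 j hj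
    have := mul_le_mul_of_nonneg_left hle hh0.le
    linarith
  -- the main induction
  have main : ∀ τ t : ℕ, τ ≤ t → ∀ᵐ ω ∂μ,
      (μ[(fun ω' => ∏ σ ∈ Finset.Icc (τ+1) (t+1),
          (1 - h * ∑ j ∈ L ℓ, a σ ω' ℓ j)) | F τ]) ω ≤ (q τ / q (t+1)) ^ γℓ := by
    intro τ t htt
    induction t, htt using Nat.le_induction with
    | base =>
      have e : (fun ω' => ∏ σ ∈ Finset.Icc (τ+1) (τ+1), (1 - h * ∑ j ∈ L ℓ, a σ ω' ℓ j))
          = fun ω' => 1 - h * ∑ j ∈ L ℓ, a (τ+1) ω' ℓ j := by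
        funext ω'
        rw [Finset.Icc_self, Finset.prod_singleton]
      rw [e]
      filter_upwards [hEZ τ] with ω hω
      exact hω.trans (hDle τ)
    | succ t ht ih =>
      have hsplit : (fun ω' => ∏ σ ∈ Finset.Icc (τ+1) (t+1+1),
            (1 - h * ∑ j ∈ L ℓ, a σ ω' ℓ j))
          = (fun ω' => ∏ σ ∈ Finset.Icc (τ+1) (t+1), (1 - h * ∑ j ∈ L ℓ, a σ ω' ℓ j)) *
            (fun ω' => 1 - h * ∑ j ∈ L ℓ, a (t+1+1) ω' ℓ j) := by
        funext ω'
        rw [Pi.mul_apply]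
        exact Finset.prod_Icc_succ_top (by omega) _
      set G : Ω → ℝ :=
        fun ω' => ∏ σ ∈ Finset.Icc (τ+1) (t+1), (1 - h * ∑ j ∈ L ℓ, a σ ω' ℓ j) with hGd
      set Z2 : Ω → ℝ := fun ω' => 1 - h * ∑ j ∈ L ℓ, a (t+1+1) ω' ℓ j with hZ2d
      set c : ℝ := 1 - h * ∑ j ∈ L ℓ, p / (A0 + h * ‖V0 ℓ - V0 j‖ * (t+1)) with hcd
      have hGm : StronglyMeasurable[F (t+1)] G := (hGmeas τ t).stronglyMeasurable
      have hGZint : Integrable (G * Z2) μ := by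
        rw [← hsplit]; exact hGint τ (t+1)
      have hA : μ[G * Z2 | F (t+1)] =ᵐ[μ] G * μ[Z2 | F (t+1)] :=
        condExp_mul_of_stronglyMeasurable_left hGm hGZint (hZint (t+1+1))
      have hG0' : ∀ ω, 0 ≤ G ω := by
        intro ω; rw [hGd]; exact hG0 τ t ω
      have hEZ2 := hEZ (t+1)
      rw [← hZ2d] at hEZ2
      push_cast at hEZ2
      rw [← hcd] at hEZ2
      have hB : μ[G * Z2 | F (t+1)] ≤ᵐ[μ] fun ω => c * G ω := by
        filter_upwards [hA, hEZ2] with ω h1 h2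
        rw [h1, Pi.mul_apply]
        calc G ω * (μ[Z2 | F (t+1)]) ω ≤ G ω * c :=
              mul_le_mul_of_nonneg_left h2 (hG0' ω)
          _ = c * G ω := mul_comm _ _
      have hC : μ[G * Z2 | F τ] =ᵐ[μ] μ[μ[G * Z2 | F (t+1)] | F τ] :=
        (condExp_condExp_of_le (hFmono (by omega : τ ≤ t+1)) (hFle (t+1))).symm
      have hDmon : μ[μ[G * Z2 | F (t+1)] | F τ] ≤ᵐ[μ] μ[(fun ω => c * G ω) | F τ] :=
        condExp_mono integrable_condExp ((hGint τ t).const_mul c) hB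
      have hE : μ[(fun ω => c * G ω) | F τ] =ᵐ[μ] fun ω => c * (μ[G | F τ]) ω := by
        have e2 : (fun ω => c * G ω) = c • G := by
          funext ω; simp [smul_eq_mul]
        rw [e2]
        filter_upwards [condExp_smul (μ := μ) c G (F τ)] with ω hω
        rw [hω, Pi.smul_apply, smul_eq_mul]
      rw [hsplit]
      have hR0 : (0:ℝ) ≤ (q τ / q (t+1)) ^ γℓ :=
        Real.rpow_nonneg (div_nonneg (hqpos τ).le (hqpos (t+1)).le) γℓ
      have hmul : (q (t+1) / q (t+1+1)) ^ γℓ * (q τ / q (t+1)) ^ γℓ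
          = (q τ / q (t+1+1)) ^ γℓ := by
        rw [← Real.mul_rpow (div_nonneg (hqpos (t+1)).le (hqpos (t+1+1)).le)
          (div_nonneg (hqpos τ).le (hqpos (t+1)).le)]
        congr 1
        rw [div_mul_div_comm, mul_comm (q (t+1+1)) (q (t+1)),
          mul_div_mul_left _ _ (hqpos (t+1)).ne']
      filter_upwards [hC, hDmon, hE, ih] with ω h1 h2 h3 h4
      calc (μ[G * Z2 | F τ]) ω = (μ[μ[G * Z2 | F (t+1)] | F τ]) ω := h1
        _ ≤ (μ[(fun ω => c * G ω) | F τ]) ω := h2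
        _ = c * (μ[G | F τ]) ω := h3
        _ ≤ c * ((q τ / q (t+1)) ^ γℓ) := by
              refine mul_le_mul_of_nonneg_left h4 ?_
              rw [hcd]
              have := hD0 (t+1); push_cast at this; exact this
        _ ≤ (q (t+1) / q (t+1+1)) ^ γℓ * ((q τ / q (t+1)) ^ γℓ) := by
              refine mul_le_mul_of_nonneg_right ?_ hR0
              rw [hcd]
              have := hDle (t+1); push_cast at this; exact this
        _ = (q τ / q (t+1+1)) ^ γℓ := hmul
  intro τ t htt
  have hfin := main τ t htt
  have hq1 : q τ = A0 + h * w0ℓ * (τ:ℝ) := by rw [hqd]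
  have hq2 : q (t+1) = A0 + h * w0ℓ * ((t:ℝ)+1) := by
    rw [hqd]; show A0 + h * w0ℓ * ((t+1 : ℕ) : ℝ) = _; push_cast; ring
  rw [hq1, hq2] at hfin
  exact hfin
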